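/- Let p be a non-negative integer and let f_0, …, f_p be holomorphic functions on the complex upper half plane ℍ. If ∑_{j=0}^p f_j(τ)·(Im τ)^{−j} = 0 for all τ ∈ ℍ, then f_j = 0 for all j = 0, …, p. -/

import Mathlib

open Complex MeasureTheory CongruenceSubgroup
open scoped MatrixGroups

noncomputable section

/-- The upper half plane, as a subset of `ℂ`. -/
def UHP : Set ℂ := {z : ℂ | 0 < z.im}

/-- The embedding of `SL(2, ℤ)` into `SL(2, ℝ)`. -/
def toSL2R (γ : SL(2, ℤ)) : Matrix.SpecialLinearGroup (Fin 2) ℝ :=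
  Matrix.SpecialLinearGroup.map (Int.castRingHom ℝ) γ

/-- The Möbius action of `g ∈ SL(2, ℝ)` on `ℂ`, `z ↦ (az+b)/(cz+d)`. -/
def moebius (g : Matrix.SpecialLinearGroup (Fin 2) ℝ) (z : ℂ) : ℂ :=
  (((g : Matrix (Fin 2) (Fin 2) ℝ) 0 0 : ℂ) * z + ((g : Matrix (Fin 2) (Fin 2) ℝ) 0 1 : ℂ)) /
    (((g : Matrix (Fin 2) (Fin 2) ℝ) 1 0 : ℂ) * z + ((g : Matrix (Fin 2) (Fin 2) ℝ) 1 1 : ℂ))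

/-- The weight `k` slash operator: `(f |_k g)(τ) = (cτ+d)^{-k} f(g·τ)`. -/
def slash (k : ℤ) (g : Matrix.SpecialLinearGroup (Fin 2) ℝ) (f : ℂ → ℂ) : ℂ → ℂ := fun z =>
  (((g : Matrix (Fin 2) (Fin 2) ℝ) 1 0 : ℂ) * z + ((g : Matrix (Fin 2) (Fin 2) ℝ) 1 1 : ℂ)) ^ (-k)
    * f (moebius g z)

/-- `f` is nearly holomorphic of degree `≤ p`: `f(τ) = ∑_{j=0}^p f_j(τ) (Im τ)^{-j}` on the upper
half plane, with each `f_j` holomorphic on the upper half plane. -/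
def IsNearlyHol (p : ℕ) (f : ℂ → ℂ) : Prop :=
  ∃ c : ℕ → ℂ → ℂ, (∀ j, j ≤ p → DifferentiableOn ℂ (c j) UHP) ∧
    ∀ z ∈ UHP, f z = ∑ j ∈ Finset.range (p + 1), c j z * (z.im : ℂ) ^ (-(j : ℤ))

/-- Membership in `N^p_k(Γ)`: nearly holomorphic of degree `≤ p`, invariant under the weight `k`
slash action of `Γ`, and bounded on `Im τ ≥ 1` after slashing by any `g ∈ SL(2, ℤ)`. -/
def NMem (k : ℤ) (p : ℕ) (Γ : Subgroup SL(2, ℤ)) (f : ℂ → ℂ) : Prop :=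
  IsNearlyHol p f ∧
    (∀ γ ∈ Γ, ∀ z ∈ UHP, slash k (toSL2R γ) f z = f z) ∧
    ∀ g : SL(2, ℤ), ∃ C : ℝ, ∀ z : ℂ, 1 ≤ z.im → ‖slash k (toSL2R g) f z‖ ≤ C

/-- Membership in `N^p_k(Γ)°`: member of `N^p_k(Γ)` such that `(f |_k g)(τ) → 0` as
`Im τ → ∞`, uniformly in `Re τ`, for every `g ∈ SL(2, ℤ)`. -/
def NCuspMem (k : ℤ) (p : ℕ) (Γ : Subgroup SL(2, ℤ)) (f : ℂ → ℂ) : Prop :=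
  NMem k p Γ f ∧
    ∀ g : SL(2, ℤ), ∀ ε : ℝ, 0 < ε → ∃ A : ℝ, ∀ z : ℂ, A ≤ z.im →
      ‖slash k (toSL2R g) f z‖ ≤ ε

/-- The Wirtinger derivative `∂f/∂τ = ½(∂f/∂x − i ∂f/∂y)`. -/
def dtau (f : ℂ → ℂ) (z : ℂ) : ℂ := (1 / 2) * (fderiv ℝ f z 1 - I * fderiv ℝ f z I)

/-- The Wirtinger derivative `∂f/∂τ̄ = ½(∂f/∂x + i ∂f/∂y)`. -/
def dtaubar (f : ℂ → ℂ) (z : ℂ) : ℂ := (1 / 2) * (fderiv ℝ f z 1 + I * fderiv ℝ f z I)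

/-- The Maass weight raising operator `R_k = k/y + 2i ∂/∂τ`. -/
def Rop (k : ℤ) (f : ℂ → ℂ) : ℂ → ℂ := fun z => ((k : ℂ) / (z.im : ℂ)) * f z + 2 * I * dtau f z

/-- The Maass weight lowering operator `L_k = −2iy² ∂/∂τ̄`. -/
def Lop (k : ℤ) (f : ℂ → ℂ) : ℂ → ℂ := fun z => -2 * I * (z.im : ℂ) ^ 2 * dtaubar f z

/-- The operator `Ω_k = y²(∂²/∂x² + ∂²/∂y²) − 2iky ∂/∂τ̄ + (k/2)(k/2 − 1)`. -/
def OmegaOp (k : ℤ) (f : ℂ → ℂ) : ℂ → ℂ := fun z =>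
  (z.im : ℂ) ^ 2 * (fderiv ℝ (fun w => fderiv ℝ f w 1) z 1 + fderiv ℝ (fun w => fderiv ℝ f w I) z I)
    - 2 * I * (k : ℂ) * (z.im : ℂ) * dtaubar f z + ((k : ℂ) / 2) * ((k : ℂ) / 2 - 1) * f z

/-- The iterated raising operator `R^v_ℓ = R_{ℓ+2v−2} ∘ ⋯ ∘ R_{ℓ+2} ∘ R_ℓ`. -/
def Riter (ℓ : ℤ) : ℕ → (ℂ → ℂ) → (ℂ → ℂ)
  | 0 => id
  | v + 1 => fun f => Rop (ℓ + 2 * v) (Riter ℓ v f)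

/-- The index set `{ℓ ∈ ℤ : ℓ ≥ 1, ℓ ≡ k (mod 2), k − 2p ≤ ℓ ≤ k}` of the structure theorems. -/
def structIdx (k : ℤ) (p : ℕ) : Finset ℤ :=
  (Finset.Icc (k - 2 * p) k).filter fun ℓ => 1 ≤ ℓ ∧ (k - ℓ) % 2 = 0

/-- `F` is a fundamental domain for the action of `Γ` on the upper half plane. -/
def IsFundDomain (Γ : Subgroup SL(2, ℤ)) (F : Set ℂ) : Prop :=
  MeasurableSet F ∧ F ⊆ UHP ∧ (∀ z ∈ UHP, ∃ γ ∈ Γ, moebius (toSL2R γ) z ∈ F) ∧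
    ∀ γ ∈ Γ, (γ : SL(2, ℤ)) ≠ 1 → (γ : SL(2, ℤ)) ≠ -1 →
      volume {z ∈ F | moebius (toSL2R γ) z ∈ F} = 0

/-- The normalized Petersson inner product
`⟨f,g⟩_k = vol(F)⁻¹ ∫_F f(τ) conj(g(τ)) (Im τ)^k dμ(τ)`, `dμ = dx dy / y²`,
computed on a fundamental domain `F`. -/
def petersson (k : ℤ) (f g : ℂ → ℂ) (F : Set ℂ) : ℂ :=
  ((∫ z in F, 1 / (z.im) ^ 2 : ℝ) : ℂ)⁻¹ *
    ∫ z in F, f z * (starRingEnd ℂ) (g z) * (z.im : ℂ) ^ k / (z.im : ℂ) ^ 2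

/-- The weight `2` nearly holomorphic Eisenstein series
`E₂(τ) = −3/(π Im τ) + 1 − 24 ∑_{n≥1} σ₁(n) e^{2πinτ}`. -/
def E2 : ℂ → ℂ := fun z =>
  -3 / ((Real.pi : ℂ) * (z.im : ℂ)) + 1 -
    24 * ∑' n : ℕ, ((ArithmeticFunction.sigma 1 (n + 1) : ℕ) : ℂ) *
      Complex.exp (2 * (Real.pi : ℂ) * I * ((n : ℂ) + 1) * z)

/-!
Fix `t > 0`. The holomorphic function `τ ↦ ∑ⱼ f_j(τ) t^{-j}` vanishes on the horizontal line
`Im τ = t`, which accumulates in `ℍ`, so by the identity theorem it vanishes on all of `ℍ`.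
Hence for each fixed `τ` the polynomial `∑ⱼ f_j(τ) X^j` vanishes at every `t⁻¹ > 0`, so it is zero.
-/

open Filter Topology Finset Polynomial

lemma isOpen_UHP : IsOpen UHP := isOpen_lt continuous_const continuous_im

lemma isPreconnected_UHP : IsPreconnected UHP := (convex_halfSpace_im_gt 0).isPreconnected

lemma frequently_im_eq_nhdsNE (z : ℂ) : ∃ᶠ w in 𝓝[≠] z, w.im = z.im := by
  have hshift : Tendsto (fun x : ℝ => z + x) (𝓝[≠] 0) (𝓝[≠] z) := by
    refine tendsto_nhdsWithin_iff.mpr ⟨?_, ?_⟩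
    · exact ((by fun_prop : Continuous fun x : ℝ => z + x).tendsto' 0 z (by simp)).mono_left
        nhdsWithin_le_nhds
    · filter_upwards [self_mem_nhdsWithin] with x hx
      simpa using hx
  exact hshift.frequently (Frequently.of_forall fun x => by simp)

lemma eqOn_zero_of_forall_im_eq {g : ℂ → ℂ} (hg : DifferentiableOn ℂ g UHP) {t : ℝ} (ht : 0 < t)
    (hline : ∀ z : ℂ, z.im = t → g z = 0) : ∀ z ∈ UHP, g z = 0 := by
  have hz₀ : (t * I : ℂ) ∈ UHP := by simp [UHP, ht]
  have hfreq : ∃ᶠ z in 𝓝[≠] (t * I : ℂ), g z = 0 :=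
    (frequently_im_eq_nhdsNE _).mono fun z hz => hline z (by simpa using hz)
  exact fun z hz => (hg.analyticOnNhd isOpen_UHP).eqOn_zero_of_preconnected_of_frequently_eq_zero
    isPreconnected_UHP hz₀ hfreq hz

lemma eq_zero_of_forall_sum_mul_pow_eq_zero {R : Type*} [CommRing R] [IsDomain R] {S : Set R}
    (hS : S.Infinite) {a : ℕ → R} {n : ℕ} (h : ∀ s ∈ S, ∑ j ∈ range n, a j * s ^ j = 0)
    {j : ℕ} (hj : j < n) : a j = 0 := by
  set Q : R[X] := ∑ i ∈ range n, monomial i (a i)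
  have hQ : Q = 0 := eq_zero_of_infinite_isRoot Q <| hS.mono fun s hs => by
    simpa [Q, eval_finsetSum] using h s hs
  simpa [Q, finsetSum_coeff, coeff_monomial, hj] using congrArg (coeff · j) hQ

theorem stmt_0 (p : ℕ) (f : ℕ → ℂ → ℂ)
    (hf : ∀ j, j ≤ p → DifferentiableOn ℂ (f j) UHP)
    (hsum : ∀ z ∈ UHP, ∑ j ∈ Finset.range (p + 1), f j z * (z.im : ℂ) ^ (-(j : ℤ)) = 0) :
    ∀ j, j ≤ p → ∀ z ∈ UHP, f j z = 0 := by
  have hpoly : ∀ s : ℝ, 0 < s → ∀ z ∈ UHP, ∑ j ∈ range (p + 1), f j z * (s : ℂ) ^ j = 0 := by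
    intro s hs
    refine eqOn_zero_of_forall_im_eq ?_ (inv_pos.mpr hs) fun z hz => ?_
    · exact DifferentiableOn.fun_sum fun j hj =>
        (hf j (Nat.lt_succ_iff.mp (mem_range.mp hj))).mul_const _
    · rw [← hsum z (by simp [UHP, hz, hs])]
      simp [hz, zpow_neg]
  intro j hj z hz
  exact eq_zero_of_forall_sum_mul_pow_eq_zero
    ((Set.Ioi_infinite 0).image ofReal_injective.injOn)
    (by rintro _ ⟨s, hs, rfl⟩; exact hpoly s hs z hz) (Nat.lt_succ_of_le hj)

end
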